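/- Assume 𝒜𝒜* is invertible and a triple (X*, y*, S*) satisfies the optimality conditions. Let D = γ‖X⁰ − X*‖_F² + (1/γ)‖S⁰ − S*‖_F², and let (X̄ᴷ, ȳᴷ, S̄ᴷ) = (1/K) Σ_{k=1}^{K} (Xᵏ, yᵏ, Sᵏ) be the averaged iterates of the exact classical ADMM iteration. Then for every K ≥ 1: −bᵀȳᴷ + bᵀy* ≤ D/(2K) + 2√(γD)·‖X*‖_F/K, and ‖𝒜*(ȳᴷ) + S̄ᴷ − C‖_F ≤ 2√(γD)/K. -/

import Mathlib

open Matrix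

namespace QADMM

variable {n m : ℕ}

/-- Trace inner product `⟨A,B⟩ = Tr(AᵀB)`. -/
noncomputable def minner (A B : Matrix (Fin n) (Fin n) ℝ) : ℝ :=
  Matrix.trace (Aᵀ * B)

/-- Frobenius norm `‖X‖_F = √(Tr(Xᵀ X))`. -/
noncomputable def frob (X : Matrix (Fin n) (Fin n) ℝ) : ℝ :=
  Real.sqrt (Matrix.trace (Xᵀ * X))

/-- The linear map `𝒜(X) = (⟨A⁽¹⁾,X⟩, …, ⟨A⁽ᵐ⁾,X⟩)`. -/
noncomputable def Amap (A : Fin m → Matrix (Fin n) (Fin n) ℝ)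
    (X : Matrix (Fin n) (Fin n) ℝ) : Fin m → ℝ :=
  fun i => minner (A i) X

/-- The adjoint map `𝒜*(y) = Σᵢ yᵢ A⁽ⁱ⁾`. -/
noncomputable def Aadj (A : Fin m → Matrix (Fin n) (Fin n) ℝ)
    (y : Fin m → ℝ) : Matrix (Fin n) (Fin n) ℝ :=
  ∑ i, y i • A i

/-- The `m×m` matrix `𝒜𝒜*` with entries `⟨A⁽ⁱ⁾, A⁽ʲ⁾⟩`. -/
noncomputable def AAt (A : Fin m → Matrix (Fin n) (Fin n) ℝ) : Matrix (Fin m) (Fin m) ℝ :=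
  Matrix.of fun i j => minner (A i) (A j)

/-- `proj` is the Frobenius-metric projection onto the PSD cone: `proj Z` is positive
semidefinite and is a nearest PSD matrix to `Z` in Frobenius norm. -/
def IsProjPSD (proj : Matrix (Fin n) (Fin n) ℝ → Matrix (Fin n) (Fin n) ℝ) : Prop :=
  ∀ Z : Matrix (Fin n) (Fin n) ℝ,
    (proj Z).PosSemidef ∧
    ∀ W : Matrix (Fin n) (Fin n) ℝ, W.PosSemidef → frob (Z - proj Z) ≤ frob (Z - W)

/-- `(X*, y*, S*)` satisfies the SDP optimality conditions: primal feasibility, dual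
feasibility, and complementary slackness. -/
def OptCond (A : Fin m → Matrix (Fin n) (Fin n) ℝ) (C : Matrix (Fin n) (Fin n) ℝ)
    (b : Fin m → ℝ) (Xs : Matrix (Fin n) (Fin n) ℝ) (ys : Fin m → ℝ)
    (Ss : Matrix (Fin n) (Fin n) ℝ) : Prop :=
  Amap A Xs = b ∧ Xs.PosSemidef ∧ Aadj A ys + Ss = C ∧ Ss.PosSemidef ∧ Xs * Ss = 0

/-- The exact classical ADMM iteration for the dual SDP, with parameter `γ > 0`:
`y^{k+1} = −(𝒜𝒜*)⁻¹(γ(𝒜(Xᵏ) − b) + 𝒜(Sᵏ − C))`,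
`S^{k+1} = Proj_{𝕊₊ⁿ}(C − 𝒜*(y^{k+1}) − γXᵏ)`,
`X^{k+1} = Xᵏ + (1/γ)(𝒜*(y^{k+1}) + S^{k+1} − C)`. -/
def ADMMSeq (A : Fin m → Matrix (Fin n) (Fin n) ℝ) (C : Matrix (Fin n) (Fin n) ℝ)
    (b : Fin m → ℝ) (projPSD : Matrix (Fin n) (Fin n) ℝ → Matrix (Fin n) (Fin n) ℝ)
    (γ : ℝ) (X : ℕ → Matrix (Fin n) (Fin n) ℝ) (y : ℕ → Fin m → ℝ)
    (S : ℕ → Matrix (Fin n) (Fin n) ℝ) : Prop :=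
  ∀ k : ℕ,
    y (k + 1) = -((AAt A)⁻¹.mulVec (γ • (Amap A (X k) - b) + Amap A (S k - C))) ∧
    S (k + 1) = projPSD (C - Aadj A (y (k + 1)) - γ • X k) ∧
    X (k + 1) = X k + γ⁻¹ • (Aadj A (y (k + 1)) + S (k + 1) - C)

end QADMM

namespace QADMM

variable {n m : ℕ}

lemma minner_comm (A B : Matrix (Fin n) (Fin n) ℝ) : minner A B = minner B A := by
  rw [minner, minner, ← Matrix.trace_transpose, Matrix.transpose_mul, Matrix.transpose_transpose]

lemma minner_add_right (A B C : Matrix (Fin n) (Fin n) ℝ) :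
    minner A (B + C) = minner A B + minner A C := by
  simp [minner, Matrix.mul_add]

lemma minner_add_left (A B C : Matrix (Fin n) (Fin n) ℝ) :
    minner (A + B) C = minner A C + minner B C := by
  rw [minner_comm, minner_add_right, minner_comm C A, minner_comm C B]

lemma minner_sub_right (A B C : Matrix (Fin n) (Fin n) ℝ) :
    minner A (B - C) = minner A B - minner A C := by
  simp [minner, Matrix.mul_sub]

lemma minner_sub_left (A B C : Matrix (Fin n) (Fin n) ℝ) :
    minner (A - B) C = minner A C - minner B C := by
  rw [minner_comm, minner_sub_right, minner_comm C A, minner_comm C B]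

lemma minner_smul_right (c : ℝ) (A B : Matrix (Fin n) (Fin n) ℝ) :
    minner A (c • B) = c * minner A B := by
  simp [minner, Matrix.mul_smul]

lemma minner_smul_left (c : ℝ) (A B : Matrix (Fin n) (Fin n) ℝ) :
    minner (c • A) B = c * minner A B := by
  rw [minner_comm, minner_smul_right, minner_comm B A]

lemma minner_neg_left (A B : Matrix (Fin n) (Fin n) ℝ) :
    minner (-A) B = -minner A B := by
  simp [minner, Matrix.neg_mul]

lemma minner_neg_right (A B : Matrix (Fin n) (Fin n) ℝ) :
    minner A (-B) = -minner A B := by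
  simp [minner, Matrix.mul_neg]

lemma minner_sum_right {ι : Type*} (s : Finset ι) (A : Matrix (Fin n) (Fin n) ℝ)
    (f : ι → Matrix (Fin n) (Fin n) ℝ) :
    minner A (∑ i ∈ s, f i) = ∑ i ∈ s, minner A (f i) := by
  simp [minner, Matrix.mul_sum]

lemma minner_sum_left {ι : Type*} (s : Finset ι) (A : Matrix (Fin n) (Fin n) ℝ)
    (f : ι → Matrix (Fin n) (Fin n) ℝ) :
    minner (∑ i ∈ s, f i) A = ∑ i ∈ s, minner (f i) A := by
  rw [minner_comm, minner_sum_right]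
  exact Finset.sum_congr rfl fun i _ => minner_comm A (f i)

lemma minner_eq_sum (A B : Matrix (Fin n) (Fin n) ℝ) :
    minner A B = ∑ p : Fin n × Fin n, A p.2 p.1 * B p.2 p.1 := by
  rw [minner]
  simp only [Matrix.trace, Matrix.diag, Matrix.mul_apply, Matrix.transpose_apply]
  rw [Fintype.sum_prod_type]

lemma minner_self_nonneg (A : Matrix (Fin n) (Fin n) ℝ) : 0 ≤ minner A A := by
  rw [minner_eq_sum]
  exact Finset.sum_nonneg fun p _ => mul_self_nonneg _

lemma frob_eq (X : Matrix (Fin n) (Fin n) ℝ) : frob X = Real.sqrt (minner X X) := rfl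

lemma frob_nonneg (X : Matrix (Fin n) (Fin n) ℝ) : 0 ≤ frob X := Real.sqrt_nonneg _

lemma frob_sq (X : Matrix (Fin n) (Fin n) ℝ) : frob X ^ 2 = minner X X :=
  Real.sq_sqrt (minner_self_nonneg X)

lemma minner_le_frob (A B : Matrix (Fin n) (Fin n) ℝ) : minner A B ≤ frob A * frob B := by
  have h := Real.sum_mul_le_sqrt_mul_sqrt (Finset.univ : Finset (Fin n × Fin n))
    (fun p => A p.2 p.1) (fun p => B p.2 p.1)
  have fr : ∀ X : Matrix (Fin n) (Fin n) ℝ,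
      frob X = Real.sqrt (∑ p : Fin n × Fin n, X p.2 p.1 ^ 2) := by
    intro X
    rw [frob_eq, minner_eq_sum]
    congr 1
    exact Finset.sum_congr rfl fun p _ => (sq (X p.2 p.1)).symm
  rw [minner_eq_sum, fr, fr]
  exact h

lemma frob_triangle (A B : Matrix (Fin n) (Fin n) ℝ) : frob (A + B) ≤ frob A + frob B := by
  have h1 : minner (A + B) (A + B) ≤ (frob A + frob B) ^ 2 := by
    have hab := minner_le_frob A B
    have ha := frob_sq A
    have hb := frob_sq B
    rw [minner_add_left, minner_add_right, minner_add_right, minner_comm B A]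
    nlinarith [frob_nonneg A, frob_nonneg B]
  calc frob (A + B) = Real.sqrt (minner (A + B) (A + B)) := rfl
    _ ≤ Real.sqrt ((frob A + frob B) ^ 2) := Real.sqrt_le_sqrt h1
    _ = frob A + frob B := Real.sqrt_sq (add_nonneg (frob_nonneg A) (frob_nonneg B))

lemma frob_smul (c : ℝ) (X : Matrix (Fin n) (Fin n) ℝ) : frob (c • X) = |c| * frob X := by
  rw [frob_eq, frob_eq, minner_smul_left, minner_smul_right,
    show c * (c * minner X X) = c ^ 2 * minner X X by ring,
    Real.sqrt_mul (sq_nonneg c), Real.sqrt_sq_eq_abs]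

lemma frob_neg (X : Matrix (Fin n) (Fin n) ℝ) : frob (-X) = frob X := by
  have := frob_smul (-1) X
  simpa using this

lemma minner_aadj (A : Fin m → Matrix (Fin n) (Fin n) ℝ) (z : Fin m → ℝ)
    (M : Matrix (Fin n) (Fin n) ℝ) :
    minner (Aadj A z) M = z ⬝ᵥ Amap A M := by
  rw [Aadj, minner_sum_left]
  simp [minner_smul_left, Amap, dotProduct]

lemma aat_mulVec (A : Fin m → Matrix (Fin n) (Fin n) ℝ) (z : Fin m → ℝ) :
    AAt A *ᵥ z = Amap A (Aadj A z) := by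
  funext i
  simp [AAt, Matrix.mulVec, dotProduct, Amap, Aadj, minner_sum_right, minner_smul_right,
    mul_comm]

lemma psd_smul {M : Matrix (Fin n) (Fin n) ℝ} (hM : M.PosSemidef) {c : ℝ} (hc : 0 ≤ c) :
    (c • M).PosSemidef := by
  refine ⟨?_, fun x => ?_⟩
  · have h1 := hM.1
    unfold Matrix.IsHermitian at h1 ⊢
    rw [Matrix.conjTranspose_smul, h1]
    simp
  · exact (hM.smul hc).2 x

lemma psd_trace_nonneg {M : Matrix (Fin n) (Fin n) ℝ} (hM : M.PosSemidef) :
    0 ≤ Matrix.trace M := by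
  rw [Matrix.trace]
  refine Finset.sum_nonneg fun i _ => ?_
  exact hM.diag_nonneg

lemma psd_transpose_eq {M : Matrix (Fin n) (Fin n) ℝ} (hM : M.PosSemidef) : Mᵀ = M := by
  have h := hM.1
  ext i j
  have h2 := congrFun (congrFun h i) j
  simpa [Matrix.conjTranspose_apply] using h2

lemma psd_minner_nonneg {P Q : Matrix (Fin n) (Fin n) ℝ} (hP : P.PosSemidef)
    (hQ : Q.PosSemidef) : 0 ≤ minner P Q := by
  obtain ⟨B, hB⟩ : ∃ B : Matrix (Fin n) (Fin n) ℝ, Q = Bᴴ * B := by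
    open MatrixOrder in
    obtain ⟨X, hX, -, hXX⟩ :=
      sub_zero Q ▸ CFC.exists_sqrt_of_isSelfAdjoint_of_quasispectrumRestricts hQ.isHermitian
        (QuasispectrumRestricts.nnreal_of_nonneg hQ.nonneg)
    exact ⟨X, by rw [sub_zero] at hXX; rw [← hXX]; exact congrArg (· * X) hX.star_eq.symm⟩
  rw [minner, psd_transpose_eq hP, hB, Matrix.trace_mul_comm, ← Matrix.trace_mul_cycle]
  exact psd_trace_nonneg (hP.mul_mul_conjTranspose_same B)

lemma proj_vi {projPSD : Matrix (Fin n) (Fin n) ℝ → Matrix (Fin n) (Fin n) ℝ}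
    (hproj : IsProjPSD projPSD) (Z W : Matrix (Fin n) (Fin n) ℝ) (hW : W.PosSemidef) :
    minner (Z - projPSD Z) (W - projPSD Z) ≤ 0 := by
  set P := projPSD Z with hPdef
  have hP : P.PosSemidef := (hproj Z).1
  have hMnn : 0 ≤ minner (W - P) (W - P) := minner_self_nonneg _
  have key : ∀ t : ℝ, 0 < t → t ≤ 1 →
      minner (Z - P) (W - P) ≤ t / 2 * minner (W - P) (W - P) := by
    intro t ht ht1
    have hWt : (P + t • (W - P)).PosSemidef := by
      have he : P + t • (W - P) = (1 - t) • P + t • W := by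
        rw [smul_sub, sub_smul, one_smul]; abel
      rw [he]
      exact (psd_smul hP (by linarith)).add (psd_smul hW ht.le)
    have h1 : frob (Z - P) ≤ frob (Z - (P + t • (W - P))) := (hproj Z).2 _ hWt
    have h2 : minner (Z - P) (Z - P) ≤
        minner (Z - (P + t • (W - P))) (Z - (P + t • (W - P))) := by
      have h3 := pow_le_pow_left₀ (frob_nonneg _) h1 2
      rwa [frob_sq, frob_sq] at h3
    have h3 : Z - (P + t • (W - P)) = (Z - P) - t • (W - P) := by abel
    rw [h3] at h2
    have h4 : minner ((Z - P) - t • (W - P)) ((Z - P) - t • (W - P))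
        = minner (Z - P) (Z - P) - 2 * t * minner (Z - P) (W - P)
          + t ^ 2 * minner (W - P) (W - P) := by
      simp only [minner_sub_left, minner_sub_right, minner_smul_left, minner_smul_right,
        minner_comm P Z, minner_comm W Z, minner_comm W P]
      ring
    rw [h4] at h2
    nlinarith
  by_contra hpos
  push_neg at hpos
  set c := minner (Z - P) (W - P)
  set Mq := minner (W - P) (W - P)
  set t := min 1 (c / (Mq + 1)) with htdef
  have htpos : 0 < t := lt_min one_pos (div_pos hpos (by linarith))
  have htle1 : t ≤ 1 := min_le_left _ _
  have h5 := key t htpos htle1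
  have htle : t ≤ c / (Mq + 1) := min_le_right _ _
  have h6 : t * (Mq + 1) ≤ c := by
    rw [← le_div_iff₀ (by linarith : (0:ℝ) < Mq + 1)]
    exact htle
  nlinarith



set_option maxHeartbeats 1600000 in
lemma step {n m : ℕ}
    (A : Fin m → Matrix (Fin n) (Fin n) ℝ)
    (C : Matrix (Fin n) (Fin n) ℝ) (b : Fin m → ℝ)
    (hAAt : IsUnit (AAt A))
    (projPSD : Matrix (Fin n) (Fin n) ℝ → Matrix (Fin n) (Fin n) ℝ)
    (hproj : IsProjPSD projPSD)
    (γ : ℝ) (hγ : 0 < γ)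
    (Xs : Matrix (Fin n) (Fin n) ℝ) (ys : Fin m → ℝ) (Ss : Matrix (Fin n) (Fin n) ℝ)
    (hopt : OptCond A C b Xs ys Ss)
    (X : ℕ → Matrix (Fin n) (Fin n) ℝ) (y : ℕ → Fin m → ℝ)
    (S : ℕ → Matrix (Fin n) (Fin n) ℝ)
    (hseq : ADMMSeq A C b projPSD γ X y S) (k : ℕ) :
    Aadj A (y (k+1)) + S (k+1) - C = γ • (X (k+1) - X k) ∧
    γ * minner (X (k+1) - Xs) (X (k+1) - Xs) + γ⁻¹ * minner (S (k+1) - Ss) (S (k+1) - Ss) ≤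
      γ * minner (X k - Xs) (X k - Xs) + γ⁻¹ * minner (S k - Ss) (S k - Ss) ∧
    2 * (b ⬝ᵥ ys - b ⬝ᵥ y (k+1)) ≤
      (γ * minner (X k - Xs) (X k - Xs) + γ⁻¹ * minner (S k - Ss) (S k - Ss))
      - (γ * minner (X (k+1) - Xs) (X (k+1) - Xs) + γ⁻¹ * minner (S (k+1) - Ss) (S (k+1) - Ss))
      + 2 * γ * minner Xs (X k - X (k+1)) := by
  obtain ⟨hy, hS, hX⟩ := hseq k
  obtain ⟨hfeas, hXsPSD, hdual, hSsPSD, hcomp⟩ := hopt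
  have hγne : γ ≠ 0 := ne_of_gt hγ
  have hγγ : γ * γ⁻¹ = 1 := mul_inv_cancel₀ hγne
  have hγ' : γ⁻¹ * γ = 1 := inv_mul_cancel₀ hγne
  -- E1
  have E1 : Aadj A (y (k+1)) + S (k+1) - C = γ • (X (k+1) - X k) := by
    rw [hX, add_sub_cancel_left, smul_smul, hγγ, one_smul]
  refine ⟨E1, ?_⟩
  -- projection facts
  have hZ : C - Aadj A (y (k+1)) - γ • X k - S (k+1) = -(γ • X (k+1)) := by
    rw [show -(γ • X (k+1)) = -(γ • X (k+1) - γ • X k) - γ • X k by abel, ← smul_sub, ← E1]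
    abel
  have hVI : ∀ W : Matrix (Fin n) (Fin n) ℝ, W.PosSemidef →
      0 ≤ minner (X (k+1)) (W - S (k+1)) := by
    intro W hW
    have h := proj_vi hproj (C - Aadj A (y (k+1)) - γ • X k) W hW
    rw [← hS, hZ, minner_neg_left, minner_smul_left] at h
    have h2 : γ * 0 ≤ γ * minner (X (k+1)) (W - S (k+1)) := by
      rw [mul_zero]; linarith
    exact le_of_mul_le_mul_left h2 hγ
  have hS'PSD : (S (k+1)).PosSemidef := hS ▸ (hproj _).1
  have hXS : minner (X (k+1)) (S (k+1)) = 0 := by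
    have h0 := hVI 0 Matrix.PosSemidef.zero
    have h2 := hVI ((2:ℝ) • S (k+1)) (psd_smul hS'PSD (by norm_num))
    rw [zero_sub, minner_neg_right] at h0
    rw [show (2:ℝ) • S (k+1) - S (k+1) = S (k+1) by rw [two_smul]; abel] at h2
    linarith
  have hXSs : 0 ≤ minner (X (k+1)) Ss := by
    have h := hVI Ss hSsPSD
    rw [minner_sub_right, hXS] at h
    linarith
  have hXsSs : minner Xs Ss = 0 := by
    rw [minner, psd_transpose_eq hXsPSD, hcomp, Matrix.trace_zero]
  have hXsS' : 0 ≤ minner Xs (S (k+1)) := psd_minner_nonneg hXsPSD hS'PSD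
  -- y-update consequence
  have hyy : Amap A (Aadj A (y (k+1))) = -(γ • (Amap A (X k) - b) + Amap A (S k - C)) := by
    rw [← aat_mulVec, hy, Matrix.mulVec_neg, Matrix.mulVec_mulVec,
      Matrix.mul_nonsing_inv _ ((Matrix.isUnit_iff_isUnit_det _).mp hAAt), Matrix.one_mulVec]
  have hAX : ∀ i, γ * minner (A i) (X (k+1)) =
      γ * b i + minner (A i) (S (k+1)) - minner (A i) (S k) := by
    intro i
    have h1 := congrFun hyy i
    simp only [Amap, Pi.neg_apply, Pi.add_apply, Pi.smul_apply, Pi.sub_apply, smul_eq_mul,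
      minner_sub_right] at h1
    have h2 : minner (A i) (X (k+1)) = minner (A i) (X k)
        + γ⁻¹ * (minner (A i) (Aadj A (y (k+1))) + minner (A i) (S (k+1)) - minner (A i) C) := by
      rw [hX, minner_add_right, minner_smul_right, minner_sub_right, minner_add_right]
    rw [h2, h1]
    field_simp
    ring
  have hfeasi : ∀ i, minner (A i) Xs = b i := fun i => congrFun hfeas i
  have hAmapP : γ • Amap A (X (k+1) - Xs) = Amap A (S (k+1) - S k) := by
    funext i
    simp only [Amap, Pi.smul_apply, smul_eq_mul, minner_sub_right]
    linear_combination hAX i - γ * hfeasi i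
  have hAadj_sub : ∀ (z w : Fin m → ℝ), Aadj A (z - w) = Aadj A z - Aadj A w := by
    intro z w
    simp [Aadj, sub_smul, Finset.sum_sub_distrib]
  have F2 : Aadj A (y (k+1) - ys) = γ • (X (k+1) - X k) - (S (k+1) - Ss) := by
    rw [hAadj_sub, show Aadj A ys = C - Ss from eq_sub_of_add_eq hdual, ← E1]
    abel
  -- scalar key identities
  have keyPC : γ * minner (X (k+1) - Xs) (Aadj A (y (k+1) - ys)) =
      minner (Aadj A (y (k+1) - ys)) (S (k+1) - S k) := by
    rw [minner_comm (X (k+1) - Xs), minner_aadj, minner_aadj, ← hAmapP,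
      dotProduct_smul, smul_eq_mul]
  have F1 : minner (X (k+1) - Xs) (Aadj A (y (k+1) - ys)) =
      γ⁻¹ * minner (Aadj A (y (k+1) - ys)) (S (k+1) - S k) := by
    rw [← keyPC, ← mul_assoc, hγ', one_mul]
  rw [F2] at F1
  have keyB : γ * (b ⬝ᵥ (y (k+1) - ys)) = γ * minner (X (k+1)) (Aadj A (y (k+1) - ys))
      - minner (Aadj A (y (k+1) - ys)) (S (k+1) - S k) := by
    rw [minner_comm (X (k+1)), minner_aadj, minner_aadj]
    rw [dotProduct, dotProduct, dotProduct, Finset.mul_sum, Finset.mul_sum,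
      ← Finset.sum_sub_distrib]
    refine Finset.sum_congr rfl fun i _ => ?_
    simp only [Amap, minner_sub_right, Pi.sub_apply]
    linear_combination (-(y (k+1) i - ys i)) * hAX i
  have keyB2 : (b ⬝ᵥ (y (k+1) - ys)) = minner (X (k+1)) (Aadj A (y (k+1) - ys))
      - γ⁻¹ * minner (Aadj A (y (k+1) - ys)) (S (k+1) - S k) := by
    linear_combination γ⁻¹ * keyB
      + (minner (X (k+1)) (Aadj A (y (k+1) - ys)) - b ⬝ᵥ (y (k+1) - ys)) * hγ'
  rw [F2] at keyB2
  -- quadratic nonnegativity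
  have qn : 0 ≤ γ * minner (X (k+1) - X k) (X (k+1) - X k)
      - 2 * minner (X (k+1) - X k) (S (k+1) - S k)
      + γ⁻¹ * minner (S (k+1) - S k) (S (k+1) - S k) := by
    have hcs := minner_le_frob (X (k+1) - X k) (S (k+1) - S k)
    have hu := frob_sq (X (k+1) - X k)
    have hv := frob_sq (S (k+1) - S k)
    have hun := frob_nonneg (X (k+1) - X k)
    have hvn := frob_nonneg (S (k+1) - S k)
    have key : (0:ℝ) ≤ γ * (γ * minner (X (k+1) - X k) (X (k+1) - X k)
        - 2 * minner (X (k+1) - X k) (S (k+1) - S k)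
        + γ⁻¹ * minner (S (k+1) - S k) (S (k+1) - S k)) := by
      have expand : γ * (γ * minner (X (k+1) - X k) (X (k+1) - X k)
          - 2 * minner (X (k+1) - X k) (S (k+1) - S k)
          + γ⁻¹ * minner (S (k+1) - S k) (S (k+1) - S k))
          = γ^2 * minner (X (k+1) - X k) (X (k+1) - X k)
            - 2 * γ * minner (X (k+1) - X k) (S (k+1) - S k)
            + minner (S (k+1) - S k) (S (k+1) - S k) := by
        field_simp
      rw [expand, ← hu, ← hv]
      nlinarith [sq_nonneg (γ * frob (X (k+1) - X k) - frob (S (k+1) - S k)),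
        mul_le_mul_of_nonneg_left hcs hγ.le]
    have h2 : γ * 0 ≤ γ * (γ * minner (X (k+1) - X k) (X (k+1) - X k)
        - 2 * minner (X (k+1) - X k) (S (k+1) - S k)
        + γ⁻¹ * minner (S (k+1) - S k) (S (k+1) - S k)) := by
      rw [mul_zero]
      exact key
    exact le_of_mul_le_mul_left h2 hγ
  -- atomize everything
  simp only [minner_sub_left, minner_sub_right, minner_add_left, minner_add_right,
    minner_smul_left, minner_smul_right,
    minner_comm (X k) (X (k+1)), minner_comm Xs (X (k+1)), minner_comm Xs (X k),
    minner_comm (S k) (S (k+1)), minner_comm Ss (S (k+1)), minner_comm Ss (S k),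
    minner_comm (S (k+1)) (X (k+1)), minner_comm (S k) (X (k+1)), minner_comm Ss (X (k+1)),
    minner_comm (S (k+1)) (X k), minner_comm (S k) (X k), minner_comm Ss (X k),
    minner_comm (S (k+1)) Xs, minner_comm (S k) Xs, minner_comm Ss Xs] at F1 keyB2 qn ⊢
  -- cleaned versions
  have F1' : γ * minner (X (k+1)) (X (k+1)) - γ * minner (X (k+1)) (X k)
      - γ * minner (X (k+1)) Xs + γ * minner (X k) Xs
      - minner (X (k+1)) (S (k+1)) + minner (X (k+1)) Ss + minner Xs (S (k+1))
      - minner Xs Ss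
      = minner (X (k+1)) (S (k+1)) - minner (X (k+1)) (S k) - minner (X k) (S (k+1))
        + minner (X k) (S k)
        - γ⁻¹ * minner (S (k+1)) (S (k+1)) + γ⁻¹ * minner (S (k+1)) (S k)
        + γ⁻¹ * minner (S (k+1)) Ss - γ⁻¹ * minner (S k) Ss := by
    linear_combination F1 + (minner (X (k+1)) (S (k+1)) - minner (X (k+1)) (S k)
      - minner (X k) (S (k+1)) + minner (X k) (S k)) * hγ'
  have keyB3 : (b ⬝ᵥ (y (k+1) - ys)) =
      γ * minner (X (k+1)) (X (k+1)) - γ * minner (X (k+1)) (X k)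
      - minner (X (k+1)) (S (k+1)) + minner (X (k+1)) Ss
      - (minner (X (k+1)) (S (k+1)) - minner (X (k+1)) (S k) - minner (X k) (S (k+1))
          + minner (X k) (S k))
      + γ⁻¹ * minner (S (k+1)) (S (k+1)) - γ⁻¹ * minner (S (k+1)) (S k)
      - γ⁻¹ * minner (S (k+1)) Ss + γ⁻¹ * minner (S k) Ss := by
    linear_combination keyB2 - (minner (X (k+1)) (S (k+1)) - minner (X (k+1)) (S k)
      - minner (X k) (S (k+1)) + minner (X k) (S k)) * hγ'
  have hbw : b ⬝ᵥ ys - b ⬝ᵥ y (k+1) = -(b ⬝ᵥ (y (k+1) - ys)) := by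
    rw [dotProduct_sub]
    ring
  constructor
  · linarith [F1', qn, hXS, hXsSs, hXSs, hXsS']
  · rw [hbw]
    linarith [keyB3, qn, hXS, hXSs]

end QADMM


namespace QADMM

set_option maxHeartbeats 1600000 in
/-- ergodic convergence of the exact classical ADMM iteration. With
`D = γ‖X⁰ − X*‖_F² + (1/γ)‖S⁰ − S*‖_F²`, the averaged iterates
`(X̄ᴷ, ȳᴷ, S̄ᴷ) = (1/K) Σ_{k=1}^{K} (Xᵏ, yᵏ, Sᵏ)` satisfy, for every `K ≥ 1`,
`−bᵀȳᴷ + bᵀy* ≤ D/(2K) + 2√(γD)‖X*‖_F/K` and `‖𝒜*(ȳᴷ) + S̄ᴷ − C‖_F ≤ 2√(γD)/K`. -/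
theorem admm_ergodic_convergence {n m : ℕ}
    (A : Fin m → Matrix (Fin n) (Fin n) ℝ) (hA : ∀ i, (A i).IsSymm)
    (C : Matrix (Fin n) (Fin n) ℝ) (hC : C.IsSymm) (b : Fin m → ℝ)
    (hAAt : IsUnit (AAt A))
    (projPSD : Matrix (Fin n) (Fin n) ℝ → Matrix (Fin n) (Fin n) ℝ)
    (hproj : IsProjPSD projPSD)
    (γ : ℝ) (hγ : 0 < γ)
    (Xs : Matrix (Fin n) (Fin n) ℝ) (ys : Fin m → ℝ) (Ss : Matrix (Fin n) (Fin n) ℝ)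
    (hopt : OptCond A C b Xs ys Ss)
    (X : ℕ → Matrix (Fin n) (Fin n) ℝ) (y : ℕ → Fin m → ℝ)
    (S : ℕ → Matrix (Fin n) (Fin n) ℝ)
    (hX0 : (X 0).IsSymm) (hS0 : (S 0).IsSymm)
    (hseq : ADMMSeq A C b projPSD γ X y S)
    (D : ℝ) (hD : D = γ * frob (X 0 - Xs) ^ 2 + (1 / γ) * frob (S 0 - Ss) ^ 2) :
    ∀ K : ℕ, 1 ≤ K →
      -(b ⬝ᵥ ((K : ℝ)⁻¹ • ∑ k ∈ Finset.Icc 1 K, y k)) + b ⬝ᵥ ys ≤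
          D / (2 * K) + 2 * Real.sqrt (γ * D) * frob Xs / K ∧
      frob (Aadj A ((K : ℝ)⁻¹ • ∑ k ∈ Finset.Icc 1 K, y k) +
          (K : ℝ)⁻¹ • (∑ k ∈ Finset.Icc 1 K, S k) - C) ≤ 2 * Real.sqrt (γ * D) / K := by
  have hγne : γ ≠ 0 := ne_of_gt hγ
  have hstep := step A C b hAAt projPSD hproj γ hγ Xs ys Ss hopt X y S hseq
  have hG0 : γ * minner (X 0 - Xs) (X 0 - Xs) + γ⁻¹ * minner (S 0 - Ss) (S 0 - Ss) = D := by
    rw [hD, frob_sq, frob_sq, one_div]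
  have hVle : ∀ k, γ * minner (X k - Xs) (X k - Xs) + γ⁻¹ * minner (S k - Ss) (S k - Ss) ≤ D := by
    intro k
    induction k with
    | zero => exact le_of_eq hG0
    | succ j ih => exact le_trans (hstep j).2.1 ih
  have hVnn : ∀ k, 0 ≤ γ * minner (X k - Xs) (X k - Xs)
      + γ⁻¹ * minner (S k - Ss) (S k - Ss) := fun k =>
    add_nonneg (mul_nonneg hγ.le (minner_self_nonneg _))
      (mul_nonneg (inv_nonneg.mpr hγ.le) (minner_self_nonneg _))
  have hDnn : 0 ≤ D := le_trans (hVnn 0) (hVle 0)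
  have hfr : ∀ k, frob (X k - Xs) ≤ Real.sqrt (D / γ) := by
    intro k
    rw [show frob (X k - Xs) = Real.sqrt (frob (X k - Xs) ^ 2) from
      (Real.sqrt_sq (frob_nonneg _)).symm]
    apply Real.sqrt_le_sqrt
    rw [frob_sq, le_div_iff₀ hγ]
    have h1 : 0 ≤ γ⁻¹ * minner (S k - Ss) (S k - Ss) :=
      mul_nonneg (inv_nonneg.mpr hγ.le) (minner_self_nonneg _)
    have h2 := hVle k
    linarith
  have hfrX0K : ∀ K : ℕ, frob (X K - X 0) ≤ 2 * Real.sqrt (D / γ) := by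
    intro K
    rw [show X K - X 0 = (X K - Xs) + (Xs - X 0) by abel]
    refine (frob_triangle _ _).trans ?_
    have h2 : frob (Xs - X 0) = frob (X 0 - Xs) := by
      rw [show Xs - X 0 = -(X 0 - Xs) by abel, frob_neg]
    rw [h2]
    linarith [hfr K, hfr 0]
  have hsqrt : γ * Real.sqrt (D / γ) = Real.sqrt (γ * D) := by
    rw [show γ * D = γ ^ 2 * (D / γ) by field_simp,
      Real.sqrt_mul (sq_nonneg γ), Real.sqrt_sq hγ.le]
  intro K hK
  have hKpos : (0:ℝ) < K := by
    have : 0 < K := by omega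
    exact_mod_cast this
  have hKne : (K:ℝ) ≠ 0 := ne_of_gt hKpos
  constructor
  · -- objective bound
    have hsum := Finset.sum_le_sum (fun j (_ : j ∈ Finset.range K) => (hstep j).2.2)
    have tV : ∑ j ∈ Finset.range K,
        ((γ * minner (X j - Xs) (X j - Xs) + γ⁻¹ * minner (S j - Ss) (S j - Ss))
          - (γ * minner (X (j+1) - Xs) (X (j+1) - Xs)
              + γ⁻¹ * minner (S (j+1) - Ss) (S (j+1) - Ss)))
        = (γ * minner (X 0 - Xs) (X 0 - Xs) + γ⁻¹ * minner (S 0 - Ss) (S 0 - Ss))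
          - (γ * minner (X K - Xs) (X K - Xs) + γ⁻¹ * minner (S K - Ss) (S K - Ss)) :=
      Finset.sum_range_sub' (fun j => γ * minner (X j - Xs) (X j - Xs)
        + γ⁻¹ * minner (S j - Ss) (S j - Ss)) K
    have tX : ∑ j ∈ Finset.range K, minner Xs (X j - X (j+1)) = minner Xs (X 0 - X K) := by
      rw [← minner_sum_right]
      congr 1
      exact Finset.sum_range_sub' X K
    have hR : ∑ j ∈ Finset.range K,
        ((γ * minner (X j - Xs) (X j - Xs) + γ⁻¹ * minner (S j - Ss) (S j - Ss))
          - (γ * minner (X (j+1) - Xs) (X (j+1) - Xs)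
              + γ⁻¹ * minner (S (j+1) - Ss) (S (j+1) - Ss))
          + 2 * γ * minner Xs (X j - X (j+1)))
        = ((γ * minner (X 0 - Xs) (X 0 - Xs) + γ⁻¹ * minner (S 0 - Ss) (S 0 - Ss))
          - (γ * minner (X K - Xs) (X K - Xs) + γ⁻¹ * minner (S K - Ss) (S K - Ss)))
          + 2 * γ * minner Xs (X 0 - X K) := by
      rw [Finset.sum_add_distrib, tV, ← Finset.mul_sum, tX]
    have hyT : b ⬝ᵥ (∑ k ∈ Finset.Icc 1 K, y k) = ∑ j ∈ Finset.range K, b ⬝ᵥ y (j+1) := by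
      have h1 : b ⬝ᵥ (∑ k ∈ Finset.Icc 1 K, y k) = ∑ k ∈ Finset.Icc 1 K, b ⬝ᵥ y k := by
        simp only [dotProduct, Finset.sum_apply, Finset.mul_sum]
        rw [Finset.sum_comm]
      rw [h1, ← Finset.Ico_add_one_right_eq_Icc, Finset.sum_Ico_eq_sum_range]
      simp [Nat.add_comm]
    have hL : ∑ j ∈ Finset.range K, 2 * (b ⬝ᵥ ys - b ⬝ᵥ y (j+1))
        = 2 * K * (b ⬝ᵥ ys) - 2 * (b ⬝ᵥ (∑ k ∈ Finset.Icc 1 K, y k)) := by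
      rw [hyT]
      simp only [mul_sub]
      rw [Finset.sum_sub_distrib, Finset.sum_const, Finset.card_range, nsmul_eq_mul,
        ← Finset.mul_sum]
      ring
    rw [hL, hR] at hsum
    have hXsbd : γ * minner Xs (X 0 - X K) ≤ 2 * Real.sqrt (γ * D) * frob Xs := by
      have h1 : minner Xs (X 0 - X K) ≤ frob Xs * frob (X 0 - X K) := minner_le_frob _ _
      have h2 : frob (X 0 - X K) = frob (X K - X 0) := by
        rw [show X 0 - X K = -(X K - X 0) by abel, frob_neg]
      have h3 := hfrX0K K
      have h4 : minner Xs (X 0 - X K) ≤ frob Xs * (2 * Real.sqrt (D / γ)) := by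
        rw [h2] at h1
        exact le_trans h1 (mul_le_mul_of_nonneg_left h3 (frob_nonneg Xs))
      have h5 := mul_le_mul_of_nonneg_left h4 hγ.le
      calc γ * minner Xs (X 0 - X K) ≤ γ * (frob Xs * (2 * Real.sqrt (D / γ))) := h5
        _ = 2 * (γ * Real.sqrt (D / γ)) * frob Xs := by ring
        _ = 2 * Real.sqrt (γ * D) * frob Xs := by rw [hsqrt]
    have main : 2 * K * (b ⬝ᵥ ys) - 2 * (b ⬝ᵥ (∑ k ∈ Finset.Icc 1 K, y k))
        ≤ D + 4 * Real.sqrt (γ * D) * frob Xs := by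
      have h6 := hVnn K
      linarith [hsum, hXsbd, hG0]
    rw [dotProduct_smul, smul_eq_mul,
      show D / (2 * (K:ℝ)) + 2 * Real.sqrt (γ * D) * frob Xs / K
          = (D + 4 * Real.sqrt (γ * D) * frob Xs) / (2 * K) by field_simp; ring,
      show -((K:ℝ)⁻¹ * (b ⬝ᵥ (∑ k ∈ Finset.Icc 1 K, y k))) + b ⬝ᵥ ys
          = (2 * K * (b ⬝ᵥ ys) - 2 * (b ⬝ᵥ (∑ k ∈ Finset.Icc 1 K, y k))) / (2 * K) by
        field_simp; ring]
    exact (div_le_div_iff_of_pos_right (by positivity)).mpr main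
  · -- residual bound
    have hsumM : ∑ k ∈ Finset.Icc 1 K, (Aadj A (y k) + S k - C) = γ • (X K - X 0) := by
      rw [← Finset.Ico_add_one_right_eq_Icc, Finset.sum_Ico_eq_sum_range]
      calc ∑ j ∈ Finset.range K, (Aadj A (y (1 + j)) + S (1 + j) - C)
          = ∑ j ∈ Finset.range K, γ • (X (j + 1) - X j) := by
            refine Finset.sum_congr rfl fun j _ => ?_
            rw [Nat.add_comm 1 j]
            exact (hstep j).1
        _ = γ • ∑ j ∈ Finset.range K, (X (j + 1) - X j) := (Finset.smul_sum).symm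
        _ = γ • (X K - X 0) := by rw [Finset.sum_range_sub X K]
    have hAadjsmul : Aadj A ((K:ℝ)⁻¹ • ∑ k ∈ Finset.Icc 1 K, y k)
        = (K:ℝ)⁻¹ • Aadj A (∑ k ∈ Finset.Icc 1 K, y k) := by
      simp [Aadj, Finset.smul_sum, smul_smul, Pi.smul_apply, smul_eq_mul]
    have hAadjsum : Aadj A (∑ k ∈ Finset.Icc 1 K, y k)
        = ∑ k ∈ Finset.Icc 1 K, Aadj A (y k) := by
      simp only [Aadj, Finset.sum_apply, Finset.sum_smul]
      rw [Finset.sum_comm]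
    have hcard : (Finset.Icc 1 K).card = K := by
      rw [Nat.card_Icc]
      omega
    have hLHSm : Aadj A ((K:ℝ)⁻¹ • ∑ k ∈ Finset.Icc 1 K, y k)
        + (K:ℝ)⁻¹ • (∑ k ∈ Finset.Icc 1 K, S k) - C
        = (K:ℝ)⁻¹ • ∑ k ∈ Finset.Icc 1 K, (Aadj A (y k) + S k - C) := by
      rw [hAadjsmul, hAadjsum, Finset.sum_sub_distrib, Finset.sum_add_distrib,
        Finset.sum_const, hcard, smul_sub, smul_add,
        ← Nat.cast_smul_eq_nsmul ℝ K C, smul_smul, inv_mul_cancel₀ hKne, one_smul]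
    rw [hLHSm, hsumM, frob_smul, frob_smul, abs_of_pos (inv_pos.mpr hKpos), abs_of_pos hγ]
    have h2 : γ * frob (X K - X 0) ≤ 2 * Real.sqrt (γ * D) := by
      have h3 := mul_le_mul_of_nonneg_left (hfrX0K K) hγ.le
      linarith [hsqrt]
    rw [div_eq_inv_mul]
    exact mul_le_mul_of_nonneg_left h2 (inv_nonneg.mpr hKpos.le)

end QADMM
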